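/- Fix δ > 0 and suppose λ̄(δ) ∈ (τ, ∞) satisfies 𝔼[(Z/(λ̄(δ)−Z))²] = 1/δ; define ζ(λ; δ) := ψ(max{λ, λ̄(δ)}; δ). Then for any reals λ₁ > λ₂ > τ: (1) if λ₂ > λ̄(δ), then ζ(λ₁; δ) > ζ(λ₂; δ) > ζ(λ̄(δ); δ); (2) if λ₁ > λ̄(δ) ≥ λ₂, then ζ(λ₁; δ) > ζ(λ₂; δ) = ζ(λ̄(δ); δ); (3) if λ̄(δ) ≥ λ₁, then ζ(λ₁; δ) = ζ(λ₂; δ) = ζ(λ̄(δ); δ). -/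

import Mathlib

/-!
For `b < a` the identity `a·Z/(a−Z) − b·Z/(b−Z) = −(a−b)·(Z/(a−Z))·(Z/(b−Z))` gives
`ψ(a) − ψ(b) = (a−b)·(1/δ − 𝔼[(Z/(a−Z))·(Z/(b−Z))])`. When `λ̄ ≤ b < a`, the integrand is
pointwise at most `(Z/(λ̄−Z))²`, strictly so where `Z ≠ 0`, which has positive probability; so
the expectation is `< 1/δ` and `ψ(·; δ)` is strictly increasing on `[λ̄, ∞)`, while `ζ` is constant on `(-∞, λ̄]`.
-/

open MeasureTheory ProbabilityTheory Real Set Filter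

lemma abs_div_sub_le_of_le_of_lt {x τ l : ℝ} (hx : x ≤ τ) (hl : τ < l) :
    |x / (l - x)| ≤ 1 + |l| / (l - τ) := by
  have hlx : 0 < l - x := by linarith
  have hsplit : x / (l - x) = l / (l - x) - 1 := by field_simp; ring
  calc |x / (l - x)| ≤ |l / (l - x)| + |1| := by rw [hsplit]; exact abs_sub _ _
    _ = |l| / (l - x) + 1 := by rw [abs_div, abs_of_pos hlx, abs_one]
    _ ≤ 1 + |l| / (l - τ) := by
        rw [add_comm]; gcongr

lemma mul_div_sub_sub_mul_div_sub {x a b : ℝ} (ha : a - x ≠ 0) (hb : b - x ≠ 0) :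
    a * (x / (a - x)) - b * (x / (b - x)) = -(a - b) * (x / (a - x) * (x / (b - x))) := by
  field_simp
  ring

lemma div_sub_mul_div_sub_lt_sq {x a b c : ℝ} (hx : x ≠ 0) (hxc : x < c) (hcb : c ≤ b)
    (hca : c < a) : x / (a - x) * (x / (b - x)) < (x / (c - x)) ^ 2 := by
  have hc : 0 < c - x := by linarith
  rw [div_mul_div_comm, div_pow, ← sq, sq (c - x)]
  refine div_lt_div_of_pos_left (by positivity) (by positivity) ?_
  exact mul_lt_mul (by linarith) (by linarith) hc (by linarith)

lemma div_sub_mul_div_sub_le_sq {x a b c : ℝ} (hxc : x < c) (hcb : c ≤ b) (hca : c < a) :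
    x / (a - x) * (x / (b - x)) ≤ (x / (c - x)) ^ 2 := by
  rcases eq_or_ne x 0 with rfl | hx
  · simp
  · exact (div_sub_mul_div_sub_lt_sq hx hxc hcb hca).le

section

variable {Ω : Type*} [MeasurableSpace Ω] {μ : Measure Ω}

theorem integral_lt_integral_of_ae_le_of_ae_lt_on {f g : Ω → ℝ} {s : Set Ω}
    (hf : Integrable f μ) (hg : Integrable g μ) (hle : f ≤ᵐ[μ] g)
    (hlt : ∀ᵐ ω ∂μ, ω ∈ s → f ω < g ω) (hs : μ s ≠ 0) : ∫ ω, f ω ∂μ < ∫ ω, g ω ∂μ := by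
  rw [← sub_pos, ← integral_sub hg hf, integral_pos_iff_support_of_nonneg_ae
    (hle.mono fun ω h => sub_nonneg.2 h) (hg.sub hf)]
  refine (pos_iff_ne_zero.2 hs).trans_le (measure_mono_ae ?_)
  filter_upwards [hlt] with ω h hω
  exact (sub_pos.2 (h hω)).ne'

variable [IsFiniteMeasure μ] {Z : Ω → ℝ} {τ : ℝ}

theorem integrable_div_sub (hZ : AEMeasurable Z μ) (hZτ : ∀ᵐ ω ∂μ, Z ω ≤ τ) {l : ℝ}
    (hl : τ < l) : Integrable (fun ω => Z ω / (l - Z ω)) μ :=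
  .of_bound (hZ.div (aemeasurable_const.sub hZ)).aestronglyMeasurable _
    (hZτ.mono fun _ h => abs_div_sub_le_of_le_of_lt h hl)

theorem integrable_div_sub_mul_div_sub (hZ : AEMeasurable Z μ) (hZτ : ∀ᵐ ω ∂μ, Z ω ≤ τ)
    {a b : ℝ} (ha : τ < a) (hb : τ < b) :
    Integrable (fun ω => Z ω / (a - Z ω) * (Z ω / (b - Z ω))) μ :=
  .of_bound ((hZ.div (aemeasurable_const.sub hZ)).mul
      (hZ.div (aemeasurable_const.sub hZ))).aestronglyMeasurable _
    (hZτ.mono fun _ h => by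
      rw [norm_mul]
      exact mul_le_mul (abs_div_sub_le_of_le_of_lt h ha) (abs_div_sub_le_of_le_of_lt h hb)
        (abs_nonneg _) (by positivity))

theorem integral_div_sub_mul_div_sub_lt (hZ : AEMeasurable Z μ) (hZτ : ∀ᵐ ω ∂μ, Z ω ≤ τ)
    (hZ0 : μ {ω | Z ω ≠ 0} ≠ 0) {a b c : ℝ} (hτc : τ < c) (hcb : c ≤ b) (hca : c < a) :
    ∫ ω, Z ω / (a - Z ω) * (Z ω / (b - Z ω)) ∂μ < ∫ ω, (Z ω / (c - Z ω)) ^ 2 ∂μ := by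
  refine integral_lt_integral_of_ae_le_of_ae_lt_on
    (integrable_div_sub_mul_div_sub hZ hZτ (hτc.trans hca) (hτc.trans_le hcb))
    ((integrable_div_sub_mul_div_sub hZ hZτ hτc hτc).congr (.of_forall fun _ => (sq _).symm))
    (hZτ.mono fun _ h => div_sub_mul_div_sub_le_sq (h.trans_lt hτc) hcb hca)
    (hZτ.mono fun _ h hZ0 => div_sub_mul_div_sub_lt_sq hZ0 (h.trans_lt hτc) hcb hca) hZ0

theorem strictMonoOn_mul_add_integral_div_sub (hZ : AEMeasurable Z μ)
    (hZτ : ∀ᵐ ω ∂μ, Z ω ≤ τ) (hZ0 : μ {ω | Z ω ≠ 0} ≠ 0) {c s : ℝ} (hτc : τ < c)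
    (hc : ∫ ω, (Z ω / (c - Z ω)) ^ 2 ∂μ ≤ s) :
    StrictMonoOn (fun l => l * (s + ∫ ω, Z ω / (l - Z ω) ∂μ)) (Ici c) := by
  intro b (hcb : c ≤ b) a (hca : c ≤ a) hba
  have hτa : τ < a := hτc.trans_le hca
  have hτb : τ < b := hτc.trans_le hcb
  have hdiff : a * ∫ ω, Z ω / (a - Z ω) ∂μ - b * ∫ ω, Z ω / (b - Z ω) ∂μ
      = -(a - b) * ∫ ω, Z ω / (a - Z ω) * (Z ω / (b - Z ω)) ∂μ := by
    rw [← integral_const_mul, ← integral_const_mul, ← integral_sub, ← integral_const_mul]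
    · refine integral_congr_ae (hZτ.mono fun ω h => ?_)
      exact mul_div_sub_sub_mul_div_sub (by linarith) (by linarith)
    · exact (integrable_div_sub hZ hZτ hτa).const_mul a
    · exact (integrable_div_sub hZ hZτ hτb).const_mul b
  have hlt := integral_div_sub_mul_div_sub_lt hZ hZτ hZ0 hτc hcb (hcb.trans_lt hba)
  have hgap : 0 < (a - b) * (s - ∫ ω, Z ω / (a - Z ω) * (Z ω / (b - Z ω)) ∂μ) :=
    mul_pos (sub_pos.2 hba) (by linarith)
  show b * (s + _) < a * (s + _)
  linear_combination hgap - hdiff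

end

theorem zeta_cases_general
    {Ω : Type*} [MeasureSpace Ω] [IsProbabilityMeasure (ℙ : Measure Ω)]
    (Z : Ω → ℝ) (hZmeas : Measurable Z)
    (hZbdd : ∃ C : ℝ, ∀ᵐ ω ∂ℙ, |Z ω| ≤ C)
    (τ : ℝ) (hτ : τ = essSup Z ℙ)
    (hZ0 : ℙ {ω | Z ω = 0} < 1)
    (ψ : ℝ → ℝ → ℝ)
    (hψ : ∀ (lam Δ : ℝ), ψ lam Δ = lam * (1 / Δ + ∫ ω, Z ω / (lam - Z ω) ∂ℙ))
    (δ : ℝ)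
    (lamBar : ℝ) (hlamBar : lamBar ∈ Set.Ioi τ)
    (hstat : ∫ ω, (Z ω / (lamBar - Z ω)) ^ 2 ∂ℙ = 1 / δ)
    (ζ : ℝ → ℝ) (hζ : ∀ lam : ℝ, ζ lam = ψ (max lam lamBar) δ) :
    ∀ lam₁ lam₂ : ℝ, τ < lam₂ → lam₂ < lam₁ →
      (lamBar < lam₂ → ζ lamBar < ζ lam₂ ∧ ζ lam₂ < ζ lam₁) ∧
      (lamBar < lam₁ → lam₂ ≤ lamBar → ζ lam₂ < ζ lam₁ ∧ ζ lam₂ = ζ lamBar) ∧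
      (lam₁ ≤ lamBar → ζ lam₁ = ζ lamBar ∧ ζ lam₂ = ζ lamBar) := by
  intro lam₁ lam₂ _ h21
  obtain ⟨C, hC⟩ := hZbdd
  have hZτ : ∀ᵐ ω ∂ℙ, Z ω ≤ τ :=
    hτ ▸ ae_le_essSup ⟨C, eventually_map.2 (hC.mono fun _ h => le_of_abs_le h)⟩
  have hZne0 : ℙ {ω | Z ω ≠ 0} ≠ 0 := by
    have hmeas : MeasurableSet {ω | Z ω = 0} := hZmeas (measurableSet_singleton 0)
    rw [← compl_ofPred, prob_compl_eq_one_sub hmeas]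
    exact (tsub_pos_of_lt hZ0).ne'
  have hψmono : StrictMonoOn (ψ · δ) (Ici lamBar) := by
    simpa only [hψ] using strictMonoOn_mul_add_integral_div_sub hZmeas.aemeasurable hZτ hZne0
      hlamBar hstat.le
  have hmono : StrictMonoOn ζ (Ici lamBar) := fun b hb a ha hba => by
    rw [hζ, hζ, max_eq_left hb, max_eq_left ha]
    exact hψmono hb ha hba
  have hconst : ∀ lam ≤ lamBar, ζ lam = ζ lamBar := fun lam h => by
    rw [hζ, hζ, max_eq_right h, max_self]
  exact ⟨fun h => ⟨hmono self_mem_Ici h.le h, hmono h.le (h.trans h21).le h21⟩,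
    fun h1 h2 => ⟨(hconst _ h2).trans_lt (hmono self_mem_Ici h1.le h1), hconst _ h2⟩,
    fun h1 => ⟨hconst _ h1, hconst _ (h21.le.trans h1)⟩⟩

/-- Monotonicity properties of `ζ(λ;δ) = ψ(max{λ, λ̄(δ)}; δ)`: for `λ₁ > λ₂ > τ`,
(1) if `λ₂ > λ̄(δ)` then `ζ(λ₁;δ) > ζ(λ₂;δ) > ζ(λ̄(δ);δ)`;
(2) if `λ₁ > λ̄(δ) ≥ λ₂` then `ζ(λ₁;δ) > ζ(λ₂;δ) = ζ(λ̄(δ);δ)`;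
(3) if `λ̄(δ) ≥ λ₁` then `ζ(λ₁;δ) = ζ(λ₂;δ) = ζ(λ̄(δ);δ)`. -/
theorem zeta_cases
    {Ω : Type*} [MeasureSpace Ω] [IsProbabilityMeasure (ℙ : Measure Ω)]
    (G Z : Ω → ℝ) (hGmeas : Measurable G) (hZmeas : Measurable Z)
    (hG : Measure.map G ℙ = gaussianReal 0 1)
    (hZbdd : ∃ C : ℝ, ∀ᵐ ω ∂ℙ, |Z ω| ≤ C)
    (τ : ℝ) (hτ : τ = essSup Z ℙ) (hτpos : 0 < τ)
    (hZ0 : ℙ {ω | Z ω = 0} < 1)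
    (ψ : ℝ → ℝ → ℝ)
    (hψ : ∀ (lam Δ : ℝ), ψ lam Δ = lam * (1 / Δ + ∫ ω, Z ω / (lam - Z ω) ∂ℙ))
    (δ : ℝ) (hδ : 0 < δ)
    (lamBar : ℝ) (hlamBar : lamBar ∈ Set.Ioi τ)
    (hstat : ∫ ω, (Z ω / (lamBar - Z ω)) ^ 2 ∂ℙ = 1 / δ)
    (ζ : ℝ → ℝ) (hζ : ∀ lam : ℝ, ζ lam = ψ (max lam lamBar) δ) :
    ∀ lam₁ lam₂ : ℝ, τ < lam₂ → lam₂ < lam₁ →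
      (lamBar < lam₂ → ζ lamBar < ζ lam₂ ∧ ζ lam₂ < ζ lam₁) ∧
      (lamBar < lam₁ → lam₂ ≤ lamBar → ζ lam₂ < ζ lam₁ ∧ ζ lam₂ = ζ lamBar) ∧
      (lam₁ ≤ lamBar → ζ lam₁ = ζ lamBar ∧ ζ lam₂ = ζ lamBar) :=
  zeta_cases_general Z hZmeas hZbdd τ hτ hZ0 ψ hψ δ lamBar hlamBar hstat ζ hζ
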